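/- Suppose A is the heart of a bounded t-structure on a triangulated category D, and for E ∈ D let H^i(E) ∈ A denote the i-th cohomology object of E with respect to this t-structure. Let (T,F) be a torsion pair in A. Then the full subcategory A♯ = { E ∈ D : H^i(E) = 0 for i ∉ {−1,0}, H^{−1}(E) ∈ F and H^0(E) ∈ T } is the heart of a bounded t-structure on D. -/

import Mathlib

/-!
The tilted t-structure has aisle `U = {X ≤ 0 : Hom(X, 𝒻) = 0}` and co-aisle (in degrees `≥ 1`)
`V = {Y ≥ 0 : Hom(𝒯, Y) = 0}`. For `X ∈ U` and `Y ∈ V`, truncation gives `H⁰(X) ∈ 𝒯` and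
`H⁰(Y) ∈ 𝒻`, and every map `X ⟶ Y` factors through a map `H⁰(X) ⟶ H⁰(Y)`, which vanishes.
To split an object `A`, let `T ⊆ H⁰(A)` be the torsion part, `Y` the cone of `T ⟶ τ_{≥0} A` and
`X` the fibre of `A ⟶ Y`. The octahedral axiom would give triangles `H⁰(A)/T → Y → τ_{≥1} A` and
`τ_{≤-1} A → X → T`; only the vanishing of Hom's into `Y` and out of `X` that these triangles imply
is needed, and it holds in any pretriangulated category.
The heart of the tilt is `U ∩ V[1]`: the objects with `H⁻¹ ∈ 𝒻`, `H⁰ ∈ 𝒯` and no other cohomology.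
-/

open CategoryTheory CategoryTheory.Limits CategoryTheory.Pretriangulated
open CategoryTheory.Triangulated

universe v u

variable (C : Type u) [Category.{v} C] [HasZeroObject C] [HasShift C ℤ]
  [Preadditive C] [∀ n : ℤ, (CategoryTheory.shiftFunctor C n).Additive] [Pretriangulated C]

/-- A t-structure is bounded if every object lies in `D^{≤n} ∩ D^{≥m}` for some `m ≤ n`. -/
def TStructureIsBounded (t : TStructure C) : Prop :=
  ∀ X : C, ∃ m n : ℤ, t.le n X ∧ t.ge m X

/-- The heart `D^{≤0} ∩ D^{≥0}` of a t-structure, as a predicate on objects. -/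
def heartP (t : TStructure C) : C → Prop := fun X => t.le 0 X ∧ t.ge 0 X

/-- `(𝒯, 𝒻)` is a torsion pair in the heart `H`: both are subcategories of `H`, there
are no nonzero maps from torsion to torsion-free objects, and every object `E` of `H`
sits in a short exact sequence `0 → T → E → F → 0` in `H` (i.e. a distinguished triangle
`T → E → F → T[1]`) with `T ∈ 𝒯` and `F ∈ 𝒻`. -/
def IsTorsionPair (H 𝒯 𝒻 : C → Prop) : Prop :=
  (∀ X : C, 𝒯 X → H X) ∧ (∀ X : C, 𝒻 X → H X) ∧
  (∀ (T F : C), 𝒯 T → 𝒻 F → ∀ f : T ⟶ F, f = 0) ∧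
  (∀ E : C, H E → ∃ (T F : C) (_ : 𝒯 T) (_ : 𝒻 F) (f : T ⟶ E) (g : E ⟶ F)
    (h : F ⟶ T⟦(1 : ℤ)⟧), Triangle.mk f g h ∈ distTriang C)

/-- The tilt `A♯ = {E : H^i(E) = 0 for i ∉ {-1,0}, H^{-1}(E) ∈ 𝒻, H^0(E) ∈ 𝒯}` of a heart
at a torsion pair `(𝒯, 𝒻)`: equivalently (via the truncation triangle
`H^{-1}(E)[1] → E → H^0(E)`), the objects `E` fitting in a distinguished triangle
`F[1] → E → T → F[2]` with `F ∈ 𝒻` and `T ∈ 𝒯`. -/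
def tiltedHeart (𝒯 𝒻 : C → Prop) : C → Prop := fun E =>
  ∃ (F T : C) (_ : 𝒻 F) (_ : 𝒯 T) (f : F⟦(1 : ℤ)⟧ ⟶ E) (g : E ⟶ T)
    (h : T ⟶ (F⟦(1 : ℤ)⟧)⟦(1 : ℤ)⟧), Triangle.mk f g h ∈ distTriang C

section

variable {C}

namespace CategoryTheory.Pretriangulated

lemma forall_shift_map_eq_zero_iff {D : Type*} [Category D] [Preadditive D] [HasShift D ℤ]
    [∀ n : ℤ, (shiftFunctor D n).Additive] (n : ℤ) (X Y : D) :
    (∀ φ : X⟦n⟧ ⟶ Y⟦n⟧, φ = 0) ↔ ∀ φ : X ⟶ Y, φ = 0 := by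
  refine ⟨fun h φ => (shiftFunctor D n).map_injective ?_, fun h ψ => ?_⟩
  · rw [h (φ⟦n⟧'), Functor.map_zero]
  · obtain ⟨φ, rfl⟩ := (shiftFunctor D n).map_surjective ψ
    rw [h φ, Functor.map_zero]

lemma mk_distinguished_of_iso₁ {X₁' X₁ X₂ X₃ : C} (e : X₁' ≅ X₁) {f : X₁ ⟶ X₂} {g : X₂ ⟶ X₃}
    {h : X₃ ⟶ X₁⟦(1 : ℤ)⟧} (hT : Triangle.mk f g h ∈ distTriang C) :
    Triangle.mk (e.hom ≫ f) g (h ≫ e.inv⟦(1 : ℤ)⟧') ∈ distTriang C :=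
  isomorphic_distinguished _ hT _ (Triangle.isoMk _ _ e (Iso.refl _) (Iso.refl _)
    (Category.comp_id _) ((Category.comp_id _).trans (Category.id_comp _).symm) (by
      show (h ≫ e.inv⟦(1 : ℤ)⟧') ≫ e.hom⟦(1 : ℤ)⟧' = 𝟙 X₃ ≫ h
      rw [Category.assoc, ← Functor.map_comp, e.inv_hom_id, Functor.map_id, Category.comp_id]
      exact (Category.id_comp _).symm))

variable {X₁ X₂ X₃ Z₁ Z₂ Z₃ : C} {f : X₁ ⟶ X₂} {g : X₂ ⟶ X₃}
  {u₁ : X₂ ⟶ Z₁} {v₁ : Z₁ ⟶ X₁⟦(1 : ℤ)⟧} {u₂ : X₃ ⟶ Z₂} {v₂ : Z₂ ⟶ X₂⟦(1 : ℤ)⟧}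
  {u₃ : X₃ ⟶ Z₃} {v₃ : Z₃ ⟶ X₁⟦(1 : ℤ)⟧}

lemma hom_to_cone_comp_eq_zero (h₁ : Triangle.mk f u₁ v₁ ∈ distTriang C)
    (h₂ : Triangle.mk g u₂ v₂ ∈ distTriang C) (h₃ : Triangle.mk (f ≫ g) u₃ v₃ ∈ distTriang C)
    {W : C} (hW₁ : ∀ φ : W ⟶ Z₁, φ = 0) (hW₂ : ∀ φ : W ⟶ Z₂, φ = 0) (φ : W ⟶ Z₃) :
    φ = 0 := by
  have hv₃ : φ ≫ v₃ = 0 := by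
    have h₃₁ : v₃ ≫ (f ≫ g)⟦(1 : ℤ)⟧' = 0 := comp_distTriang_mor_zero₃₁ _ h₃
    obtain ⟨ψ₂, hψ₂⟩ : ∃ ψ₂ : W ⟶ Z₂, (φ ≫ v₃) ≫ f⟦(1 : ℤ)⟧' = ψ₂ ≫ v₂ :=
      Triangle.coyoneda_exact₁ _ h₂ _ (by
        rw [Functor.map_comp] at h₃₁
        show ((φ ≫ v₃) ≫ f⟦(1 : ℤ)⟧') ≫ g⟦(1 : ℤ)⟧' = 0
        simp only [Category.assoc, h₃₁, comp_zero])
    obtain ⟨ψ₁, hψ₁⟩ : ∃ ψ₁ : W ⟶ Z₁, φ ≫ v₃ = ψ₁ ≫ v₁ :=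
      Triangle.coyoneda_exact₁ _ h₁ _ (by
        show (φ ≫ v₃) ≫ f⟦(1 : ℤ)⟧' = 0
        rw [hψ₂, hW₂ ψ₂, zero_comp])
    rw [hψ₁, hW₁ ψ₁, zero_comp]
  obtain ⟨χ, rfl⟩ : ∃ χ : W ⟶ X₃, φ = χ ≫ u₃ := Triangle.coyoneda_exact₃ _ h₃ φ hv₃
  obtain ⟨χ₂, rfl⟩ : ∃ χ₂ : W ⟶ X₂, χ = χ₂ ≫ g := Triangle.coyoneda_exact₂ _ h₂ χ (hW₂ _)
  obtain ⟨χ₁, rfl⟩ : ∃ χ₁ : W ⟶ X₁, χ₂ = χ₁ ≫ f := Triangle.coyoneda_exact₂ _ h₁ χ₂ (hW₁ _)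
  have h₁₂ : (f ≫ g) ≫ u₃ = 0 := comp_distTriang_mor_zero₁₂ _ h₃
  simp only [Category.assoc] at h₁₂ ⊢
  rw [h₁₂, comp_zero]

lemma hom_from_cone_comp_eq_zero (h₁ : Triangle.mk f u₁ v₁ ∈ distTriang C)
    (h₂ : Triangle.mk g u₂ v₂ ∈ distTriang C) (h₃ : Triangle.mk (f ≫ g) u₃ v₃ ∈ distTriang C)
    {W : C} (hW₁ : ∀ φ : Z₁ ⟶ W, φ = 0) (hW₂ : ∀ φ : Z₂ ⟶ W, φ = 0) (φ : Z₃ ⟶ W) :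
    φ = 0 := by
  have hu₃ : u₃ ≫ φ = 0 := by
    have h₁₂ : (f ≫ g) ≫ u₃ = 0 := comp_distTriang_mor_zero₁₂ _ h₃
    obtain ⟨ψ₁, hψ₁⟩ : ∃ ψ₁ : Z₁ ⟶ W, g ≫ u₃ ≫ φ = u₁ ≫ ψ₁ :=
      Triangle.yoneda_exact₂ _ h₁ _ (by
        show f ≫ g ≫ u₃ ≫ φ = 0
        simp only [← Category.assoc, h₁₂, zero_comp])
    obtain ⟨ψ₂, hψ₂⟩ : ∃ ψ₂ : Z₂ ⟶ W, u₃ ≫ φ = u₂ ≫ ψ₂ :=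
      Triangle.yoneda_exact₂ _ h₂ _ (by
        show g ≫ u₃ ≫ φ = 0
        rw [hψ₁, hW₁ ψ₁, comp_zero])
    rw [hψ₂, hW₂ ψ₂, comp_zero]
  obtain ⟨γ, rfl⟩ : ∃ γ : X₁⟦(1 : ℤ)⟧ ⟶ W, φ = v₃ ≫ γ := Triangle.yoneda_exact₃ _ h₃ φ hu₃
  obtain ⟨γ₂, rfl⟩ : ∃ γ₂ : X₂⟦(1 : ℤ)⟧ ⟶ W, γ = (Triangle.mk f u₁ v₁).rotate.mor₃ ≫ γ₂ :=
    Triangle.yoneda_exact₃ _ (rot_of_distTriang _ h₁) γ (hW₁ _)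
  obtain ⟨γ₃, rfl⟩ : ∃ γ₃ : X₃⟦(1 : ℤ)⟧ ⟶ W, γ₂ = (Triangle.mk g u₂ v₂).rotate.mor₃ ≫ γ₃ :=
    Triangle.yoneda_exact₃ _ (rot_of_distTriang _ h₂) γ₂ (hW₂ _)
  have h₃₁ : v₃ ≫ (f ≫ g)⟦(1 : ℤ)⟧' = 0 := comp_distTriang_mor_zero₃₁ _ h₃
  rw [Functor.map_comp] at h₃₁
  show v₃ ≫ (-f⟦(1 : ℤ)⟧') ≫ (-g⟦(1 : ℤ)⟧') ≫ γ₃ = 0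
  simp only [Preadditive.neg_comp, Preadditive.comp_neg, neg_neg, ← Category.assoc, h₃₁,
    zero_comp]

end CategoryTheory.Pretriangulated

namespace IsTorsionPair

variable {t : TStructure C} {𝒯 𝒻 : ObjectProperty C} (htp : IsTorsionPair C (heartP C t) 𝒯 𝒻)
include htp

lemma torsion_of_mem_leftOrthogonal (h𝒯iso : ∀ X Y : C, (X ≅ Y) → 𝒯 X → 𝒯 Y) {E : C}
    (hE : heartP C t E) (h : 𝒻.leftOrthogonal E) : 𝒯 E := by
  obtain ⟨h𝒯, h𝒻, -, hseq⟩ := htp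
  obtain ⟨T, F, hT, hF, i, p, δ, hTr⟩ := hseq E hE
  have hF₀ : IsZero F := by
    rw [IsZero.iff_id_eq_zero]
    obtain ⟨r, hr⟩ : ∃ r : T⟦(1 : ℤ)⟧ ⟶ F, 𝟙 F = δ ≫ r :=
      Triangle.yoneda_exact₃ _ hTr (𝟙 F) (by
        show p ≫ 𝟙 F = 0
        rw [h p hF, zero_comp])
    rw [hr, t.zero_of_isLE_of_isGE r (-1) 0 (by lia)
      ⟨t.le_shift 0 1 (-1) (by lia) T (h𝒯 T hT).1⟩ ⟨(h𝒻 F hF).2⟩, comp_zero]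
  have : IsIso i := (Triangle.isZero₃_iff_isIso₁ _ hTr).1 hF₀
  exact h𝒯iso T E (asIso i) hT

lemma torsionFree_of_mem_rightOrthogonal (h𝒻iso : ∀ X Y : C, (X ≅ Y) → 𝒻 X → 𝒻 Y) {E : C}
    (hE : heartP C t E) (h : 𝒯.rightOrthogonal E) : 𝒻 E := by
  obtain ⟨h𝒯, h𝒻, -, hseq⟩ := htp
  obtain ⟨T, F, hT, hF, i, p, δ, hTr⟩ := hseq E hE
  have hT₀ : IsZero T := by
    rw [IsZero.iff_id_eq_zero]
    obtain ⟨r, hr⟩ : ∃ r : T ⟶ F⟦(-1 : ℤ)⟧, 𝟙 T = r ≫ (Triangle.mk i p δ).invRotate.mor₁ :=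
      Triangle.coyoneda_exact₂ _ (inv_rot_of_distTriang _ hTr) (𝟙 T) (by
        show 𝟙 T ≫ i = 0
        rw [h i hT, comp_zero])
    rw [hr, t.zero_of_isLE_of_isGE r 0 1 (by lia)
      ⟨(h𝒯 T hT).1⟩ ⟨t.ge_shift 0 (-1) 1 (by lia) F (h𝒻 F hF).2⟩]
    exact zero_comp
  have : IsIso p := (Triangle.isZero₁_iff_isIso₂ _ hTr).1 hT₀
  exact h𝒻iso F E (asIso p).symm hF

end IsTorsionPair

namespace CategoryTheory.Triangulated.TStructure

variable (t : TStructure C)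

def tiltLEZero (𝒻 : ObjectProperty C) : ObjectProperty C := t.le 0 ⊓ 𝒻.leftOrthogonal

def tiltGEOne (𝒯 : ObjectProperty C) : ObjectProperty C := t.ge 0 ⊓ 𝒯.rightOrthogonal

instance (𝒻 : ObjectProperty C) : (t.tiltLEZero 𝒻).IsClosedUnderIsomorphisms := by
  dsimp only [tiltLEZero]
  infer_instance

instance (𝒯 : ObjectProperty C) : (t.tiltGEOne 𝒯).IsClosedUnderIsomorphisms := by
  dsimp only [tiltGEOne]
  infer_instance

variable {t} {𝒯 𝒻 : ObjectProperty C}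

lemma tiltLEZero_ext₂ (T : Triangle C) (hT : T ∈ distTriang C) (h₁ : t.tiltLEZero 𝒻 T.obj₁)
    (h₃ : t.tiltLEZero 𝒻 T.obj₃) : t.tiltLEZero 𝒻 T.obj₂ :=
  ⟨(t.isLE₂ T hT 0 ⟨h₁.1⟩ ⟨h₃.1⟩).le, 𝒻.leftOrthogonal.ext_of_isTriangulatedClosed₂ T hT h₁.2 h₃.2⟩

lemma tiltGEOne_ext₂ (T : Triangle C) (hT : T ∈ distTriang C) (h₁ : t.tiltGEOne 𝒯 T.obj₁)
    (h₃ : t.tiltGEOne 𝒯 T.obj₃) : t.tiltGEOne 𝒯 T.obj₂ :=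
  ⟨(t.isGE₂ T hT 0 ⟨h₁.1⟩ ⟨h₃.1⟩).ge, 𝒯.rightOrthogonal.ext_of_isTriangulatedClosed₂ T hT h₁.2 h₃.2⟩

section

variable (htp : IsTorsionPair C (heartP C t) 𝒯 𝒻)
include htp

lemma tiltLEZero_of_le_neg_one {X : C} (hX : t.le (-1) X) : t.tiltLEZero 𝒻 X :=
  ⟨t.le_monotone (by lia) X hX, fun F f hF =>
    t.zero_of_isLE_of_isGE f (-1) 0 (by lia) ⟨hX⟩ ⟨(htp.2.1 F hF).2⟩⟩

lemma tiltGEOne_of_ge_one {X : C} (hX : t.ge 1 X) : t.tiltGEOne 𝒯 X :=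
  ⟨t.ge_antitone (by lia) X hX, fun T f hT =>
    t.zero_of_isLE_of_isGE f 0 1 (by lia) ⟨(htp.1 T hT).1⟩ ⟨hX⟩⟩

lemma tiltLEZero_of_torsion {T : C} (hT : 𝒯 T) : t.tiltLEZero 𝒻 T :=
  ⟨(htp.1 T hT).1, fun F f hF => htp.2.2.1 T F hT hF f⟩

lemma tiltGEOne_of_torsionFree {F : C} (hF : 𝒻 F) : t.tiltGEOne 𝒯 F :=
  ⟨(htp.2.1 F hF).2, fun T f hT => htp.2.2.1 T F hT hF f⟩

lemma torsion_obj₃_of_tiltLEZero (h𝒯iso : ∀ X Y : C, (X ≅ Y) → 𝒯 X → 𝒯 Y) (T : Triangle C)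
    (hT : T ∈ distTriang C) (h₁ : t.le (-1) T.obj₁) (h₂ : t.tiltLEZero 𝒻 T.obj₂)
    (h₃ : t.ge 0 T.obj₃) : 𝒯 T.obj₃ := by
  have h₁' : t.le (-2) (T.obj₁⟦(1 : ℤ)⟧) := t.le_shift (-1) 1 (-2) (by lia) _ h₁
  have h₃' : t.le 0 T.obj₃ :=
    (t.isLE₂ _ (rot_of_distTriang _ hT) 0 ⟨h₂.1⟩ ⟨t.le_monotone (by lia) _ h₁'⟩).le
  refine htp.torsion_of_mem_leftOrthogonal h𝒯iso ⟨h₃', h₃⟩ fun F α hF => ?_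
  obtain ⟨β, rfl⟩ := T.yoneda_exact₃ hT α (h₂.2 _ hF)
  rw [t.zero_of_isLE_of_isGE β (-2) 0 (by lia) ⟨h₁'⟩ ⟨(htp.2.1 F hF).2⟩, comp_zero]

lemma torsionFree_obj₁_of_tiltGEOne (h𝒻iso : ∀ X Y : C, (X ≅ Y) → 𝒻 X → 𝒻 Y) (T : Triangle C)
    (hT : T ∈ distTriang C) (h₁ : t.le 0 T.obj₁) (h₂ : t.tiltGEOne 𝒯 T.obj₂)
    (h₃ : t.ge 1 T.obj₃) : 𝒻 T.obj₁ := by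
  have h₃' : t.ge 2 (T.obj₃⟦(-1 : ℤ)⟧) := t.ge_shift 1 (-1) 2 (by lia) _ h₃
  have h₁' : t.ge 0 T.obj₁ :=
    (t.isGE₂ _ (inv_rot_of_distTriang _ hT) 0 ⟨t.ge_antitone (by lia) _ h₃'⟩ ⟨h₂.1⟩).ge
  refine htp.torsionFree_of_mem_rightOrthogonal h𝒻iso ⟨h₁, h₁'⟩ fun T' α hT' => ?_
  obtain ⟨β, rfl⟩ := T.invRotate.coyoneda_exact₂ (inv_rot_of_distTriang _ hT) α (h₂.2 _ hT')
  rw [t.zero_of_isLE_of_isGE β 0 2 (by lia) ⟨(htp.1 T' hT').1⟩ ⟨h₃'⟩]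
  exact zero_comp

lemma tiltLEZero_hom_tiltGEOne_eq_zero (h𝒯iso : ∀ X Y : C, (X ≅ Y) → 𝒯 X → 𝒯 Y)
    (h𝒻iso : ∀ X Y : C, (X ≅ Y) → 𝒻 X → 𝒻 Y) {X Y : C} (hX : t.tiltLEZero 𝒻 X)
    (hY : t.tiltGEOne 𝒯 Y) (f : X ⟶ Y) : f = 0 := by
  obtain ⟨X₁, X₂, hX₁, hX₂, a, b, c, hTX⟩ := t.exists_triangle X (-1) 0 (by lia)
  obtain ⟨Y₁, Y₂, hY₁, hY₂, a', b', c', hTY⟩ := t.exists_triangle Y 0 1 (by lia)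
  have hX₂𝒯 : 𝒯 X₂ := torsion_obj₃_of_tiltLEZero htp h𝒯iso _ hTX hX₁ hX hX₂
  have hY₁𝒻 : 𝒻 Y₁ := torsionFree_obj₁_of_tiltGEOne htp h𝒻iso _ hTY hY₁ hY hY₂
  obtain ⟨g₁, rfl⟩ : ∃ g₁ : X ⟶ Y₁, f = g₁ ≫ a' := Triangle.coyoneda_exact₂ _ hTY f
    (t.zero_of_isLE_of_isGE _ 0 1 (by lia) ⟨hX.1⟩ ⟨hY₂⟩)
  obtain ⟨g₂, rfl⟩ : ∃ g₂ : X₂ ⟶ Y₁, g₁ = b ≫ g₂ := Triangle.yoneda_exact₂ _ hTX g₁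
    (t.zero_of_isLE_of_isGE _ (-1) 0 (by lia) ⟨hX₁⟩ ⟨(htp.2.1 _ hY₁𝒻).2⟩)
  rw [htp.2.2.1 _ _ hX₂𝒯 hY₁𝒻 g₂, comp_zero, zero_comp]

lemma exists_triangle_torsion_tiltGEOne {A : C} (hA : t.ge 0 A) :
    ∃ (T Y : C) (_ : 𝒯 T) (_ : t.tiltGEOne 𝒯 Y) (i : T ⟶ A) (q : A ⟶ Y)
      (δ : Y ⟶ T⟦(1 : ℤ)⟧), Triangle.mk i q δ ∈ distTriang C := by
  obtain ⟨B, B', hB, hB', m, n, e, hTB⟩ := t.exists_triangle A 0 1 (by lia)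
  have hB₀ : t.ge 0 B := (t.isGE₂ _ (inv_rot_of_distTriang _ hTB) 0
    ⟨t.ge_antitone (by lia) _ (t.ge_shift 1 (-1) 2 (by lia) B' hB')⟩ ⟨hA⟩).ge
  obtain ⟨T, F, hT, hF, i, p, δ, hTF⟩ := htp.2.2.2 B ⟨hB, hB₀⟩
  obtain ⟨Y, q, δY, hTY⟩ := distinguished_cocone_triangle (i ≫ m)
  have hY {W : C} (hWF : ∀ φ : W ⟶ F, φ = 0) (hWB : ∀ φ : W ⟶ B', φ = 0) (φ : W ⟶ Y) :
      φ = 0 :=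
    hom_to_cone_comp_eq_zero hTF hTB hTY hWF hWB φ
  refine ⟨T, Y, hT, ⟨?_, fun T' φ hT' => hY (htp.2.2.1 T' F hT' hF)
    (fun ψ => t.zero_of_isLE_of_isGE ψ 0 1 (by lia) ⟨(htp.1 T' hT').1⟩ ⟨hB'⟩) φ⟩,
    i ≫ m, q, δY, hTY⟩
  refine ((t.isGE_iff_orthogonal (-1) 0 (by lia) Y).2 fun Z φ hZ => hY
    (fun ψ => t.zero_of_isLE_of_isGE ψ (-1) 0 (by lia) hZ ⟨(htp.2.1 F hF).2⟩)
    (fun ψ => t.zero_of_isLE_of_isGE ψ (-1) 1 (by lia) hZ ⟨hB'⟩) φ).ge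

lemma tiltLEZero_of_fiber_comp {A A' A'' T Y X : C} {a : A' ⟶ A} {w : A ⟶ A''}
    {b : A'' ⟶ A'⟦(1 : ℤ)⟧} (hTA : Triangle.mk a w b ∈ distTriang C) (hA' : t.le (-1) A')
    {i : T ⟶ A''} {q : A'' ⟶ Y} {δ : Y ⟶ T⟦(1 : ℤ)⟧} (hTY : Triangle.mk i q δ ∈ distTriang C)
    (hT : 𝒯 T) {f : X ⟶ A} {h : Y ⟶ X⟦(1 : ℤ)⟧} (hTX : Triangle.mk f (w ≫ q) h ∈ distTriang C) :
    t.tiltLEZero 𝒻 X := by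
  have hX {Z : C} (hA'Z : ∀ φ : A' ⟶ Z, φ = 0) (hTZ : ∀ φ : T ⟶ Z, φ = 0) (φ : X ⟶ Z) :
      φ = 0 := by
    rw [← forall_shift_map_eq_zero_iff 1] at hA'Z hTZ
    revert φ
    rw [← forall_shift_map_eq_zero_iff 1]
    exact hom_from_cone_comp_eq_zero (rot_of_distTriang _ hTA) (rot_of_distTriang _ hTY)
      (rot_of_distTriang _ hTX) hA'Z hTZ
  refine ⟨((t.isLE_iff_orthogonal 0 1 (by lia) X).2 fun Z φ hZ => hX
    (fun ψ => t.zero_of_isLE_of_isGE ψ (-1) 1 (by lia) ⟨hA'⟩ hZ)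
    (fun ψ => t.zero_of_isLE_of_isGE ψ 0 1 (by lia) ⟨(htp.1 T hT).1⟩ hZ) φ).le,
    fun F φ hF => hX (fun ψ => t.zero_of_isLE_of_isGE ψ (-1) 0 (by lia) ⟨hA'⟩ ⟨(htp.2.1 F hF).2⟩)
      (htp.2.2.1 T F hT hF) φ⟩

lemma exists_triangle_tiltLEZero_tiltGEOne (A : C) :
    ∃ (X Y : C) (_ : t.tiltLEZero 𝒻 X) (_ : t.tiltGEOne 𝒯 Y) (f : X ⟶ A) (g : A ⟶ Y)
      (h : Y ⟶ X⟦(1 : ℤ)⟧), Triangle.mk f g h ∈ distTriang C := by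
  obtain ⟨A', A'', hA', hA'', a, w, b, hTA⟩ := t.exists_triangle A (-1) 0 (by lia)
  obtain ⟨T, Y, hT, hY, i, q, δ, hTY⟩ := exists_triangle_torsion_tiltGEOne htp hA''
  obtain ⟨X, f, h, hTX⟩ := distinguished_cocone_triangle₁ (w ≫ q)
  exact ⟨X, Y, tiltLEZero_of_fiber_comp htp hTA hA' hTY hT hTX, hY, f, w ≫ q, h, hTX⟩

def tilt (h𝒯iso : ∀ X Y : C, (X ≅ Y) → 𝒯 X → 𝒯 Y) (h𝒻iso : ∀ X Y : C, (X ≅ Y) → 𝒻 X → 𝒻 Y) :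
    TStructure C where
  le n := (t.tiltLEZero 𝒻).shift n
  ge n := (t.tiltGEOne 𝒯).shift (n - 1)
  le_shift n a n' h X hX := by rwa [← ObjectProperty.shift_shift _ a n' n h] at hX
  ge_shift n a n' h X hX := by
    rwa [← ObjectProperty.shift_shift _ a (n' - 1) (n - 1) (by lia)] at hX
  zero' X Y f hX hY := by
    rw [ObjectProperty.shift_zero] at hX
    rw [sub_self, ObjectProperty.shift_zero] at hY
    exact tiltLEZero_hom_tiltGEOne_eq_zero htp h𝒯iso h𝒻iso hX hY f
  le_zero_le X hX := by
    rw [ObjectProperty.shift_zero] at hX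
    exact tiltLEZero_of_le_neg_one htp (t.le_shift 0 1 (-1) (by lia) X hX.1)
  ge_one_le X hX := by
    rw [sub_self, ObjectProperty.shift_zero] at hX
    exact tiltGEOne_of_ge_one htp (t.ge_shift 0 (0 - 1) 1 (by lia) X hX.1)
  exists_triangle_zero_one A := by
    simpa only [sub_self, ObjectProperty.shift_zero] using
      exists_triangle_tiltLEZero_tiltGEOne htp A

lemma heartP_tilt_iff (h𝒯iso : ∀ X Y : C, (X ≅ Y) → 𝒯 X → 𝒯 Y)
    (h𝒻iso : ∀ X Y : C, (X ≅ Y) → 𝒻 X → 𝒻 Y) (X : C) :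
    heartP C (tilt htp h𝒯iso h𝒻iso) X ↔
      t.tiltLEZero 𝒻 X ∧ t.tiltGEOne 𝒯 (X⟦(-1 : ℤ)⟧) := by
  change (t.tiltLEZero 𝒻).shift 0 X ∧ (t.tiltGEOne 𝒯).shift (0 - 1) X ↔ _
  rw [ObjectProperty.shift_zero, zero_sub]
  rfl

lemma tiltedHeart_iff (h𝒯iso : ∀ X Y : C, (X ≅ Y) → 𝒯 X → 𝒯 Y)
    (h𝒻iso : ∀ X Y : C, (X ≅ Y) → 𝒻 X → 𝒻 Y) (X : C) :
    tiltedHeart C 𝒯 𝒻 X ↔ t.tiltLEZero 𝒻 X ∧ t.tiltGEOne 𝒯 (X⟦(-1 : ℤ)⟧) := by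
  constructor
  · rintro ⟨F, T, hF, hT, f, g, h, hTr⟩
    refine ⟨tiltLEZero_ext₂ _ hTr ?_ (tiltLEZero_of_torsion htp hT),
      tiltGEOne_ext₂ _ (Triangle.shift_distinguished _ hTr (-1)) ?_ ?_⟩
    · exact tiltLEZero_of_le_neg_one htp (t.le_shift 0 1 (-1) (by lia) F (htp.2.1 F hF).1)
    · exact (t.tiltGEOne 𝒯).prop_of_iso (shiftShiftNeg F (1 : ℤ)).symm
        (tiltGEOne_of_torsionFree htp hF)
    · exact tiltGEOne_of_ge_one htp (t.ge_shift 0 (-1) 1 (by lia) T (htp.1 T hT).2)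
  · rintro ⟨hX, hX'⟩
    obtain ⟨X₁, X₂, hX₁, hX₂, a, b, c, hT⟩ := t.exists_triangle X (-1) 0 (by lia)
    have hF : 𝒻 (X₁⟦(-1 : ℤ)⟧) := torsionFree_obj₁_of_tiltGEOne htp h𝒻iso _
      (Triangle.shift_distinguished _ hT (-1)) (t.le_shift (-1) (-1) 0 (by lia) X₁ hX₁) hX'
      (t.ge_shift 0 (-1) 1 (by lia) X₂ hX₂)
    exact ⟨X₁⟦(-1 : ℤ)⟧, X₂, hF, torsion_obj₃_of_tiltLEZero htp h𝒯iso _ hT hX₁ hX hX₂,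
      _, _, _, mk_distinguished_of_iso₁ (shiftNegShift X₁ (1 : ℤ)) hT⟩

end

end CategoryTheory.Triangulated.TStructure

end

theorem tiltedHeart_is_heart_of_bounded_tStructure (t : TStructure C)
    (hbd : TStructureIsBounded C t) (𝒯 𝒻 : C → Prop)
    (h𝒯iso : ∀ X Y : C, (X ≅ Y) → 𝒯 X → 𝒯 Y) (h𝒻iso : ∀ X Y : C, (X ≅ Y) → 𝒻 X → 𝒻 Y)
    (htp : IsTorsionPair C (heartP C t) 𝒯 𝒻) :
    ∃ t' : TStructure C, TStructureIsBounded C t' ∧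
      ∀ X : C, heartP C t' X ↔ tiltedHeart C 𝒯 𝒻 X := by
  refine ⟨TStructure.tilt htp h𝒯iso h𝒻iso, fun X => ?_, fun X =>
    (TStructure.heartP_tilt_iff htp h𝒯iso h𝒻iso X).trans
      (TStructure.tiltedHeart_iff htp h𝒯iso h𝒻iso X).symm⟩
  obtain ⟨m, n, hn, hm⟩ := hbd X
  exact ⟨m, n + 1,
    TStructure.tiltLEZero_of_le_neg_one htp (t.le_shift n (n + 1) (-1) (by lia) X hn),
    TStructure.tiltGEOne_of_ge_one htp (t.ge_shift m (m - 1) 1 (by lia) X hm)⟩
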